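/- Let p > 0, α > 0 and K ≥ 1 an integer. For 0 < D ≤ α define p₀(D) = D·(D/α)^{pK}·(D^p + Kα^p − KD^p)^{−1/p}, the joint distortion of the select-non-zero estimator D^{(K)}(D) = p₀(D)·(2/p)·α^p·D^p·(D^p + Kα^p − KD^p)^{−1} + (1 − p₀(D))·(2/p)·D^p, and the distortion redundancy factor ρ(D) = D^{(K)}(D) / ( (2/p)·(D^K·α^{1−K})^p ). Then lim_{D → α⁻} ρ(D) = 1; i.e., in the limit of vanishing rate, K independent encodings with select-non-zero decoding achieve the same distortion as a single encoding at K times the rate. -/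
import Mathlib


/-- The probability `p₀(D) = D·(D/α)^{pK}·(D^p + Kα^p − KD^p)^{−1/p}` that all `K` outputs of
the parallel generalized-Gaussian test channels are zero. -/
noncomputable def probAllZero (p α : ℝ) (K : ℕ) (D : ℝ) : ℝ :=
  D * (D / α) ^ (p * K) * (D ^ p + K * α ^ p - K * D ^ p) ^ (-(1 / p))

/-- The joint `p`-th power distortion of the select-non-zero estimator,
`D^{(K)}(D) = p₀(D)·(2/p)·α^p·D^p·(D^p + Kα^p − KD^p)^{−1} + (1 − p₀(D))·(2/p)·D^p`. -/
noncomputable def jointDistortion (p α : ℝ) (K : ℕ) (D : ℝ) : ℝ :=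
  probAllZero p α K D * ((2 / p) * α ^ p * D ^ p * (D ^ p + K * α ^ p - K * D ^ p)⁻¹) +
    (1 - probAllZero p α K D) * ((2 / p) * D ^ p)

/-- STATEMENT 11: the distortion redundancy factor
`ρ(D) = D^{(K)}(D) / ( (2/p)·(D^K·α^{1−K})^p )` tends to `1` as `D → α⁻`: in the limit of
vanishing rate, `K` independent encodings with select-non-zero decoding achieve the same
distortion as a single encoding at `K` times the rate. -/
theorem genGauss_distortion_redundancy_tendsto_one (p α : ℝ) (hp : 0 < p) (hα : 0 < α)
    (K : ℕ) (hK : 1 ≤ K) :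
    Filter.Tendsto
      (fun D : ℝ => jointDistortion p α K D / ((2 / p) * (D ^ K * α ^ (1 - (K : ℝ))) ^ p))
      (nhdsWithin α (Set.Iio α)) (nhds 1) := by
  have hαp : (0:ℝ) < α ^ p := Real.rpow_pos_of_pos hα p
  have hcont : ContinuousAt
      (fun D : ℝ => jointDistortion p α K D / ((2 / p) * (D ^ K * α ^ (1 - (K : ℝ))) ^ p)) α := by
    have h1 : ContinuousAt (fun D : ℝ => D ^ p) α :=
      (Real.continuousAt_rpow_const _ _ (Or.inl hα.ne')).comp continuousAt_id
    have hbase : ContinuousAt (fun D : ℝ => D ^ p + K * α ^ p - K * D ^ p) α := by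
      fun_prop
    have hbaseval : α ^ p + K * α ^ p - K * α ^ p = α ^ p := by ring
    have hp0 : ContinuousAt (fun D : ℝ => probAllZero p α K D) α := by
      unfold probAllZero
      apply ContinuousAt.mul
      apply ContinuousAt.mul continuousAt_id
      · exact (Real.continuousAt_rpow_const _ _
          (Or.inl (by positivity))).comp (continuousAt_id.div_const α)
      · exact (Real.continuousAt_rpow_const _ _
          (Or.inl (by rw [hbaseval]; exact hαp.ne'))).comp hbase
    have hjd : ContinuousAt (fun D : ℝ => jointDistortion p α K D) α := by
      unfold jointDistortion
      apply ContinuousAt.add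
      · exact hp0.mul ((continuousAt_const.mul h1).mul
          ((hbase.inv₀ (by rw [hbaseval]; exact hαp.ne'))))
      · exact (continuousAt_const.sub hp0).mul (continuousAt_const.mul h1)
    apply hjd.div
    · exact continuousAt_const.mul ((Real.continuousAt_rpow_const _ _
        (Or.inl (by positivity))).comp ((continuousAt_id.pow K).mul continuousAt_const))
    · have : (0:ℝ) < (2 / p) * (α ^ K * α ^ (1 - (K:ℝ))) ^ p := by positivity
      exact this.ne'
  have hval : jointDistortion p α K α / ((2 / p) * (α ^ K * α ^ (1 - (K : ℝ))) ^ p) = 1 := by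
    have hbaseval : α ^ p + (K:ℝ) * α ^ p - K * α ^ p = α ^ p := by ring
    have hp0 : probAllZero p α K α = 1 := by
      unfold probAllZero
      rw [hbaseval, div_self hα.ne', Real.one_rpow,
        ← Real.rpow_mul hα.le]
      have : p * -(1/p) = -1 := by field_simp
      rw [this, Real.rpow_neg_one, mul_one, mul_inv_cancel₀ hα.ne']
    have hden : α ^ K * α ^ (1 - (K:ℝ)) = α := by
      rw [← Real.rpow_natCast α K, ← Real.rpow_add hα]
      norm_num
    rw [hden]
    unfold jointDistortion
    rw [hp0, hbaseval]
    field_simp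
    ring
  have := hcont.continuousWithinAt (s := Set.Iio α)
  have h2 := this.tendsto
  rw [hval] at h2
  exact h2
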